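/- Suppose h: ℝ_{≥0} → ℝ is C² with h′ ≤ 0 nondecreasing and h″ ≥ 0 nonincreasing, and let 0 ≤ r₁, r₂ ≤ R with r₁² + r₂² ≥ max(R_{c1}², R_{c2}²), where 2h′(R_{c1}²) = h′(0) and 2h″(R_{c2}²) = h″(0). Then for all θ, σ²(r₁,r₂,θ) := 2(h(0) − h(2(r₁²+r₂²−2r₁r₂cos θ))) + 4(−h′(0)+2h′(r₁²+r₂²))(r₁²+r₂²−2r₁r₂cos θ) + 4(h″(0)−2h″(r₁²+r₂²))((r₁²+r₂²)²−4r₁²r₂²cos²θ) is bounded above by 2(h(0) − h(8R²)) + 16R²(−h′(0) + 2h′(2R²)) + 16R⁴(h″(0) − 2h″(2R²)). -/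
import Mathlib


open Set

set_option maxHeartbeats 1000000

/-- Far-regime bound on the (polar form of the) pointwise error variance. Here `h' = h′`
and `h'' = h″` on `[0, ∞)`, with `h` nonincreasing, `h′ ≤ 0` nondecreasing and `h″ ≥ 0`
nonincreasing, and the critical radii satisfy `2h′(R_{c1}²) = h′(0)`,
`2h″(R_{c2}²) = h″(0)`. -/
theorem far_regime_variance_bound
    (h h' h'' : ℝ → ℝ)
    (hd1 : ∀ x ∈ Ici (0:ℝ), HasDerivWithinAt h (h' x) (Ici 0) x)
    (hd2 : ∀ x ∈ Ici (0:ℝ), HasDerivWithinAt h' (h'' x) (Ici 0) x)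
    (hanti : AntitoneOn h (Ici 0))
    (hh'nonpos : ∀ x ∈ Ici (0:ℝ), h' x ≤ 0)
    (hh'mono : MonotoneOn h' (Ici 0))
    (hh''nonneg : ∀ x ∈ Ici (0:ℝ), 0 ≤ h'' x)
    (hh''anti : AntitoneOn h'' (Ici 0))
    (Rc1 Rc2 R r1 r2 : ℝ)
    (hRc1 : 0 ≤ Rc1) (hRc2 : 0 ≤ Rc2)
    (hcrit1 : 2 * h' (Rc1^2) = h' 0) (hcrit2 : 2 * h'' (Rc2^2) = h'' 0)
    (hr1 : 0 ≤ r1) (hr1R : r1 ≤ R) (hr2 : 0 ≤ r2) (hr2R : r2 ≤ R)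
    (hfar : max (Rc1^2) (Rc2^2) ≤ r1^2 + r2^2) :
    ∀ θ : ℝ,
      2 * (h 0 - h (2 * (r1^2 + r2^2 - 2*r1*r2*Real.cos θ)))
        + 4 * (-h' 0 + 2 * h' (r1^2 + r2^2)) * (r1^2 + r2^2 - 2*r1*r2*Real.cos θ)
        + 4 * (h'' 0 - 2 * h'' (r1^2 + r2^2))
            * ((r1^2 + r2^2)^2 - 4*r1^2*r2^2*(Real.cos θ)^2)
      ≤ 2 * (h 0 - h (8 * R^2))
        + 16 * R^2 * (-h' 0 + 2 * h' (2 * R^2))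
        + 16 * R^4 * (h'' 0 - 2 * h'' (2 * R^2)) := by
  intro θ
  have hc := abs_le.mp (Real.abs_cos_le_one θ)
  generalize Real.cos θ = c at hc ⊢
  have hr12 : 0 ≤ r1 * r2 := mul_nonneg hr1 hr2
  have h2r : 2 * r1 * r2 ≤ r1 ^ 2 + r2 ^ 2 := by nlinarith [sq_nonneg (r1 - r2)]
  have hs0 : (0:ℝ) ≤ r1 ^ 2 + r2 ^ 2 := by positivity
  have hsR : r1 ^ 2 + r2 ^ 2 ≤ 2 * R ^ 2 := by nlinarith
  have hR0 : (0:ℝ) ≤ R := le_trans hr1 hr1R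
  have hq0 : 0 ≤ r1 ^ 2 + r2 ^ 2 - 2 * r1 * r2 * c := by nlinarith
  have hqR : 2 * (r1 ^ 2 + r2 ^ 2 - 2 * r1 * r2 * c) ≤ 8 * R ^ 2 := by nlinarith
  -- term 1
  have t1 : h (8 * R ^ 2) ≤ h (2 * (r1 ^ 2 + r2 ^ 2 - 2 * r1 * r2 * c)) := by
    exact hanti (mem_Ici.mpr (by linarith)) (mem_Ici.mpr (by positivity)) hqR
  -- term 2
  have hA0 : 0 ≤ -h' 0 + 2 * h' (r1 ^ 2 + r2 ^ 2) := by
    have := hh'mono (mem_Ici.mpr (by positivity : (0:ℝ) ≤ Rc1 ^ 2)) (mem_Ici.mpr hs0)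
      (le_trans (le_max_left _ _) hfar)
    linarith
  have hA : -h' 0 + 2 * h' (r1 ^ 2 + r2 ^ 2) ≤ -h' 0 + 2 * h' (2 * R ^ 2) := by
    have := hh'mono (mem_Ici.mpr hs0) (mem_Ici.mpr (by positivity)) hsR
    linarith
  have t2 : 4 * (-h' 0 + 2 * h' (r1 ^ 2 + r2 ^ 2)) * (r1 ^ 2 + r2 ^ 2 - 2 * r1 * r2 * c)
      ≤ 16 * R ^ 2 * (-h' 0 + 2 * h' (2 * R ^ 2)) := by
    have h4 : r1 ^ 2 + r2 ^ 2 - 2 * r1 * r2 * c ≤ 4 * R ^ 2 := by linarith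
    have := mul_le_mul hA h4 hq0 (hA0.trans hA)
    nlinarith [this]
  -- term 3
  have hB0 : 0 ≤ h'' 0 - 2 * h'' (r1 ^ 2 + r2 ^ 2) := by
    have := hh''anti (mem_Ici.mpr (by positivity : (0:ℝ) ≤ Rc2 ^ 2)) (mem_Ici.mpr hs0)
      (le_trans (le_max_right _ _) hfar)
    linarith
  have hB : h'' 0 - 2 * h'' (r1 ^ 2 + r2 ^ 2) ≤ h'' 0 - 2 * h'' (2 * R ^ 2) := by
    have := hh''anti (mem_Ici.mpr hs0) (mem_Ici.mpr (by positivity)) hsR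
    linarith
  have hP0 : 0 ≤ (r1 ^ 2 + r2 ^ 2) ^ 2 - 4 * r1 ^ 2 * r2 ^ 2 * c ^ 2 := by
    have hc2 : c ^ 2 ≤ 1 := by nlinarith [hc.1, hc.2]
    nlinarith [mul_nonneg (sub_nonneg.2 hc2) (mul_nonneg (sq_nonneg r1) (sq_nonneg r2)),
      sq_nonneg (r1 ^ 2 - r2 ^ 2)]
  have hP : (r1 ^ 2 + r2 ^ 2) ^ 2 - 4 * r1 ^ 2 * r2 ^ 2 * c ^ 2 ≤ 4 * R ^ 4 := by
    nlinarith [sq_nonneg (r1 * r2 * c), hs0, hsR]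
  have t3 : 4 * (h'' 0 - 2 * h'' (r1 ^ 2 + r2 ^ 2))
        * ((r1 ^ 2 + r2 ^ 2) ^ 2 - 4 * r1 ^ 2 * r2 ^ 2 * c ^ 2)
      ≤ 16 * R ^ 4 * (h'' 0 - 2 * h'' (2 * R ^ 2)) := by
    have := mul_le_mul hB hP hP0 (hB0.trans hB)
    nlinarith [this]
  linarith
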